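/- arXiv:1406.5383 — 2 statements merged into one kernel-verified Lean document; each statement's English description precedes it below -/
import Mathlib

section
/- Let d ≥ 2 be an even integer. Then there exists a set S ⊆ {0,1}^d such that: (1) every x ∈ S has weight exactly d/2, i.e., Σ_{i=1}^d x_i = d/2; (2) any two distinct x, x' ∈ S satisfy Δ_H(x,x') ≥ d/16; and (3) |S| ≥ 2^{d/16}. -/
/-!
Greedy (Gilbert–Varshamov) construction inside the middle slice `A` of `{0,1}^d`: a code in `A`
with minimum distance `> k` that cannot be extended covers `A` by Hamming balls of radius `k`,
so it has at least `|A| / V` words, where `V = ∑_{i ≤ k} C(d, i)`. Now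
`|A| = C(d, d/2) ≥ 2^d / d`, and comparing with the terms of `(1 + 15)^d` gives
`V ≤ 16^d / 15^(d-k)`. For `k = ⌊(d-1)/16⌋` the resulting bound `2^d 15^(d-k) / (d 16^d)`
exceeds `2^(d/16)`: after raising to the 16th power this comes down to `d 2^d ≤ 3^d` and
`3 · 2^33 ≤ 5^15`.
-/

open Finset

/-- The weight of a binary word `x : Fin d → Bool` is the number of coordinates equal to 1. -/
def weight {d : ℕ} (x : Fin d → Bool) : ℕ := (Finset.univ.filter fun i => x i = true).card

lemma card_filter_weight_eq (d w : ℕ) :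
    #{x : Fin d → Bool | weight x = w} = d.choose w := by
  calc #{x : Fin d → Bool | weight x = w} = #(powersetCard w (univ : Finset (Fin d))) := by
        refine card_nbij' (fun x => ({i | x i = true} : Finset (Fin d)))
          (fun s i => decide (i ∈ s)) ?_ ?_ ?_ ?_
        · intro x hx
          rw [mem_coe, mem_filter] at hx
          simpa [weight] using hx
        · intro s hs
          rw [mem_coe, mem_filter]
          simpa [weight] using hs
        · intro x _
          funext i
          simp
        · intro s _
          ext i
          simp
    _ = d.choose w := by simp

lemma two_pow_le_mul_card_filter_weight_eq_half {d : ℕ} (hd : 0 < d) (he : Even d) :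
    2 ^ d ≤ d * #{x : Fin d → Bool | weight x = d / 2} := by
  obtain ⟨n, rfl⟩ := he
  rw [card_filter_weight_eq, ← two_mul, Nat.mul_div_cancel_left n two_pos,
    ← Nat.centralBinom_eq_two_mul_choose, pow_mul]
  exact Nat.four_pow_le_two_mul_self_mul_centralBinom n (by omega)

section Hamming

variable {ι β : Type*} [Fintype ι]

lemma card_filter_hammingDist_le_le_sum_choose [DecidableEq ι] (t : ι → Bool) (k : ℕ) :
    #{a | hammingDist a t ≤ k} ≤ ∑ i ∈ range (k + 1), (Fintype.card ι).choose i := by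
  have hmaps : ∀ a ∈ ({a | hammingDist a t ≤ k} : Finset (ι → Bool)),
      ({i | a i ≠ t i} : Finset ι) ∈ (range (k + 1)).biUnion fun i => powersetCard i univ := by
    intro a ha
    simp only [mem_filter, mem_univ, true_and] at ha
    simp only [mem_biUnion, mem_range, mem_powersetCard]
    exact ⟨_, Nat.lt_succ_of_le ha, subset_univ _, rfl⟩
  have hinj : Set.InjOn (fun a : ι → Bool => ({i | a i ≠ t i} : Finset ι)) Set.univ := by
    intro a _ b _ hab
    funext i
    have := congrArg (i ∈ ·) hab
    simp only [mem_filter, mem_univ, true_and, eq_iff_iff] at this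
    revert this
    cases a i <;> cases b i <;> cases t i <;> simp
  calc #{a | hammingDist a t ≤ k}
      ≤ #((range (k + 1)).biUnion fun i => powersetCard i (univ : Finset ι)) :=
        card_le_card_of_injOn _ hmaps (hinj.mono (Set.subset_univ _))
    _ ≤ ∑ i ∈ range (k + 1), #(powersetCard i (univ : Finset ι)) := card_biUnion_le
    _ = ∑ i ∈ range (k + 1), (Fintype.card ι).choose i := by simp [card_powersetCard]

lemma exists_pairwise_lt_hammingDist_and_cover [DecidableEq β]
    (A : Finset (ι → β)) (k : ℕ) :
    ∃ T ⊆ A, (T : Set (ι → β)).Pairwise (fun x y => k < hammingDist x y) ∧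
      ∀ a ∈ A, ∃ t ∈ T, hammingDist a t ≤ k := by
  induction A using Finset.induction_on with
  | empty => exact ⟨∅, subset_refl _, by simp, by simp⟩
  | insert a A _ ih =>
    obtain ⟨T, hTA, hT, hcover⟩ := ih
    by_cases ha : ∃ t ∈ T, hammingDist a t ≤ k
    · refine ⟨T, hTA.trans (subset_insert a A), hT, ?_⟩
      simpa [forall_mem_insert] using ⟨ha, hcover⟩
    · push Not at ha
      refine ⟨insert a T, insert_subset_insert a hTA, ?_, ?_⟩
      · rw [coe_insert, Set.pairwise_insert]
        exact ⟨hT, fun t ht _ => ⟨ha t ht, hammingDist_comm a t ▸ ha t ht⟩⟩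
      · rw [forall_mem_insert]
        refine ⟨⟨a, mem_insert_self a T, by simp⟩, fun b hb => ?_⟩
        obtain ⟨t, ht, hbt⟩ := hcover b hb
        exact ⟨t, mem_insert_of_mem ht, hbt⟩

lemma exists_pairwise_lt_hammingDist_card_le_mul [DecidableEq ι] (A : Finset (ι → Bool))
    (k : ℕ) :
    ∃ T ⊆ A, (T : Set (ι → Bool)).Pairwise (fun x y => k < hammingDist x y) ∧
      #A ≤ #T * ∑ i ∈ range (k + 1), (Fintype.card ι).choose i := by
  obtain ⟨T, hTA, hT, hcover⟩ := exists_pairwise_lt_hammingDist_and_cover A k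
  refine ⟨T, hTA, hT, ?_⟩
  have hsub : A ⊆ T.biUnion fun t => {a | hammingDist a t ≤ k} := fun a ha => by
    obtain ⟨t, ht, hat⟩ := hcover a ha
    exact mem_biUnion.2 ⟨t, ht, by simpa using hat⟩
  exact (card_le_card hsub).trans
    (card_biUnion_le_card_mul _ _ _ fun t _ => card_filter_hammingDist_le_le_sum_choose t k)

end Hamming

lemma sum_range_choose_mul_pow_le {n k m : ℕ} (hm : 0 < m) (hk : k ≤ n) :
    (∑ i ∈ range (k + 1), n.choose i) * m ^ (n - k) ≤ (m + 1) ^ n := by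
  rw [add_comm m 1, add_pow, sum_mul]
  calc ∑ i ∈ range (k + 1), n.choose i * m ^ (n - k)
      ≤ ∑ i ∈ range (k + 1), 1 ^ i * m ^ (n - i) * n.choose i := by
        refine sum_le_sum fun i hi => ?_
        rw [one_pow, one_mul, mul_comm]
        have := mem_range.1 hi
        exact Nat.mul_le_mul_right _ (Nat.pow_le_pow_right hm (by omega))
    _ ≤ ∑ i ∈ range (n + 1), 1 ^ i * m ^ (n - i) * n.choose i :=
        sum_le_sum_of_subset (range_subset_range.2 (by omega))

lemma mul_two_pow_le_three_pow : ∀ n : ℕ, n * 2 ^ n ≤ 3 ^ n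
  | 0 => by norm_num
  | 1 => by norm_num
  | 2 => by norm_num
  | n + 3 =>
    calc (n + 3) * 2 ^ (n + 3) = 2 * (n + 3) * 2 ^ (n + 2) := by ring
      _ ≤ 3 * (n + 2) * 2 ^ (n + 2) := Nat.mul_le_mul_right _ (by omega)
      _ = 3 * ((n + 2) * 2 ^ (n + 2)) := by ring
      _ ≤ 3 * 3 ^ (n + 2) := by gcongr; exact mul_two_pow_le_three_pow (n + 2)
      _ = 3 ^ (n + 3) := by ring

lemma two_pow_mul_pow_sixteen_le (d : ℕ) :
    2 ^ d * (d * 16 ^ d) ^ 16 ≤ 2 ^ (16 * d) * 15 ^ (15 * d) :=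
  calc 2 ^ d * (d * 16 ^ d) ^ 16 = (d * 2 ^ d) ^ 16 * 2 ^ (49 * d) := by
        rw [show (16 : ℕ) ^ d = 2 ^ (4 * d) by rw [pow_mul]; norm_num]
        ring
    _ ≤ (3 ^ d) ^ 16 * 2 ^ (49 * d) := by gcongr; exact mul_two_pow_le_three_pow d
    _ = (3 ^ 16 * 2 ^ 33) ^ d * 2 ^ (16 * d) := by
        rw [mul_pow, ← pow_mul, ← pow_mul, ← pow_mul]; ring
    _ ≤ (15 ^ 15) ^ d * 2 ^ (16 * d) := by
        gcongr ?_ * _; exact Nat.pow_le_pow_left (by norm_num) d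
    _ = 2 ^ (16 * d) * 15 ^ (15 * d) := by rw [← pow_mul]; ring

lemma two_pow_le_pow_sixteen_of_le {d k N : ℕ} (hd : 0 < d) (hk : 16 * k ≤ d)
    (h : 2 ^ d * 15 ^ (d - k) ≤ d * N * 16 ^ d) : 2 ^ d ≤ N ^ 16 := by
  refine Nat.le_of_mul_le_mul_right (c := (d * 16 ^ d) ^ 16) ?_ (by positivity)
  calc 2 ^ d * (d * 16 ^ d) ^ 16 ≤ 2 ^ (16 * d) * 15 ^ (15 * d) := two_pow_mul_pow_sixteen_le d
    _ ≤ 2 ^ (16 * d) * 15 ^ (16 * (d - k)) :=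
        Nat.mul_le_mul_left _ (Nat.pow_le_pow_right (by norm_num) (by omega))
    _ = (2 ^ d * 15 ^ (d - k)) ^ 16 := by ring
    _ ≤ (d * N * 16 ^ d) ^ 16 := by gcongr
    _ = N ^ 16 * (d * 16 ^ d) ^ 16 := by ring

lemma two_rpow_div_sixteen_le_of_pow_le {d N : ℕ} (h : 2 ^ d ≤ N ^ 16) :
    (2 : ℝ) ^ ((d : ℝ) / 16) ≤ N := by
  have hpow : ((2 : ℝ) ^ ((d : ℝ) / 16)) ^ 16 = 2 ^ d := by
    rw [← Real.rpow_natCast, ← Real.rpow_mul zero_le_two]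
    norm_num
  rw [← pow_le_pow_iff_left₀ (by positivity) (Nat.cast_nonneg N) (by norm_num : 16 ≠ 0), hpow]
  exact_mod_cast h

/-- For every even `d ≥ 2` there is a set `S ⊆ {0,1}^d` of words of weight exactly `d/2`,
with pairwise Hamming distance at least `d/16`, of size at least `2^{d/16}`. -/
theorem stmt_1 (d : ℕ) (hd : 2 ≤ d) (hde : Even d) :
    ∃ S : Finset (Fin d → Bool),
      (∀ x ∈ S, weight x = d / 2) ∧
      (∀ x ∈ S, ∀ x' ∈ S, x ≠ x' → (d : ℝ) / 16 ≤ (hammingDist x x' : ℝ)) ∧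
      ((2 : ℝ) ^ ((d : ℝ) / 16) ≤ (S.card : ℝ)) := by
  set k := (d - 1) / 16
  obtain ⟨T, hTA, hT, hcard⟩ :=
    exists_pairwise_lt_hammingDist_card_le_mul {x : Fin d → Bool | weight x = d / 2} k
  rw [Fintype.card_fin] at hcard
  refine ⟨T, fun x hx => (mem_filter.1 (hTA hx)).2, fun x hx x' hx' hne => ?_, ?_⟩
  · have hdist := hT hx hx' hne
    rw [div_le_iff₀ (by norm_num)]
    exact_mod_cast (by omega : d ≤ hammingDist x x' * 16)
  · refine two_rpow_div_sixteen_le_of_pow_le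
      (two_pow_le_pow_sixteen_of_le (k := k) (by omega) (by omega) ?_)
    calc 2 ^ d * 15 ^ (d - k) ≤ d * #{x : Fin d → Bool | weight x = d / 2} * 15 ^ (d - k) :=
          Nat.mul_le_mul_right _ (two_pow_le_mul_card_filter_weight_eq_half (by omega) hde)
      _ ≤ d * (#T * ∑ i ∈ range (k + 1), d.choose i) * 15 ^ (d - k) := by gcongr
      _ = d * #T * ((∑ i ∈ range (k + 1), d.choose i) * 15 ^ (d - k)) := by ring
      _ ≤ d * #T * 16 ^ d := by gcongr; exact sum_range_choose_mul_pow_le (by norm_num) (by omega)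
end

section
/- Fix α ∈ (0,1), μ₀ > 0, t > 0, and unit vectors w₁, w_i, w_j ∈ ℝ^d with θ(w₁, w_i) ≤ 6.5·t and θ(w₁, w_j) ≤ 6.5·t. Let η_i and η_j be the constructed label functions relative to reference w₁: η_i(x) = 1/2 + sgn(⟨w_i,x⟩)·℘(|φ(x,w_i)|) if |φ(x,w₁)| ≤ 6.5·t and η_i(x) = 1/2 + sgn(⟨w₁,x⟩)·℘(|φ(x,w₁)|) otherwise, and analogously for η_j with w_j in place of w_i. Then for every nonzero x ∈ ℝ^d: (i) if |φ(x,w₁)| > 6.5·t then η_i(x) = η_j(x); and (ii) in all cases |η_i(x) − η_j(x)| ≤ 2·μ₀·(26·t)^{α/(1−α)}. -/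
open scoped RealInnerProductSpace

/-- The signed margin angle `φ(x,w) = π/2 − θ(x,w)`. -/
noncomputable def phi {d : ℕ} (x w : EuclideanSpace ℝ (Fin d)) : ℝ :=
  Real.pi / 2 - InnerProductGeometry.angle x w

/-- `℘(ϑ) = min{2^{α/(1−α)}·μ₀·ϑ^{α/(1−α)}, 1/2}`. -/
noncomputable def wp (α μ₀ ϑ : ℝ) : ℝ :=
  min ((2 : ℝ) ^ (α / (1 - α)) * μ₀ * ϑ ^ (α / (1 - α))) (1 / 2)

/-- The constructed label function `η` relative to the reference hypothesis `w₁`. -/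
noncomputable def eta {d : ℕ} (α μ₀ t : ℝ) (w₁ w : EuclideanSpace ℝ (Fin d))
    (x : EuclideanSpace ℝ (Fin d)) : ℝ :=
  if |phi x w₁| ≤ 6.5 * t then 1 / 2 + Real.sign ⟪w, x⟫ * wp α μ₀ |phi x w|
  else 1 / 2 + Real.sign ⟪w₁, x⟫ * wp α μ₀ |phi x w₁|

open InnerProductGeometry Real in
/-- Spherical triangle inequality for unit vectors. -/
lemma angle_triangle_unit {d : ℕ} (u v w : EuclideanSpace ℝ (Fin d))
    (hu : ‖u‖ = 1) (hv : ‖v‖ = 1) (hw : ‖w‖ = 1) :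
    angle u w ≤ angle u v + angle v w := by
  set A := angle u v with hA
  set B := angle v w with hB
  have hA0 : 0 ≤ A := angle_nonneg u v
  have hAπ : A ≤ π := angle_le_pi u v
  have hB0 : 0 ≤ B := angle_nonneg v w
  have hBπ : B ≤ π := angle_le_pi v w
  by_cases hπ : π ≤ A + B
  · exact (angle_le_pi u w).trans hπ
  push_neg at hπ
  set a := (⟪u, v⟫ : ℝ) with ha
  set b := (⟪w, v⟫ : ℝ) with hb
  have hcA : Real.cos A = a := by
    have := cos_angle_mul_norm_mul_norm u v
    rw [hu, hv] at this; simpa using this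
  have hcB : Real.cos B = b := by
    have := cos_angle_mul_norm_mul_norm v w
    rw [hv, hw] at this
    rw [hb, real_inner_comm]
    simpa [angle_comm] using this
  have hsA : Real.sin A = √(1 - a * a) := by
    have := sin_angle_mul_norm_mul_norm u v
    rw [hu, hv, real_inner_self_eq_norm_sq, real_inner_self_eq_norm_sq, hu, hv] at this
    simpa using this
  have hsB : Real.sin B = √(1 - b * b) := by
    have := sin_angle_mul_norm_mul_norm v w
    rw [hv, hw, real_inner_self_eq_norm_sq, real_inner_self_eq_norm_sq, hv, hw] at this
    rw [hb, real_inner_comm]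
    simpa [angle_comm] using this
  -- Cauchy–Schwarz on the orthogonal components
  have hip : (⟪u - a • v, w - b • v⟫ : ℝ) = ⟪u, w⟫ - a * b := by
    have hvv : (⟪v, v⟫ : ℝ) = 1 := by
      rw [real_inner_self_eq_norm_sq, hv]; norm_num
    simp only [inner_sub_left, inner_sub_right, real_inner_smul_left, real_inner_smul_right]
    rw [hvv, real_inner_comm w v, ← hb, ← ha]
    ring
  have hnp : ‖u - a • v‖ = √(1 - a * a) := by
    rw [← Real.sqrt_sq (norm_nonneg _), ← real_inner_self_eq_norm_sq]
    congr 1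
    have hvv : (⟪v, v⟫ : ℝ) = 1 := by
      rw [real_inner_self_eq_norm_sq, hv]; norm_num
    have huu : (⟪u, u⟫ : ℝ) = 1 := by
      rw [real_inner_self_eq_norm_sq, hu]; norm_num
    simp only [inner_sub_left, inner_sub_right, real_inner_smul_left, real_inner_smul_right]
    rw [hvv, huu, real_inner_comm u v, ← ha]
    ring
  have hnq : ‖w - b • v‖ = √(1 - b * b) := by
    rw [← Real.sqrt_sq (norm_nonneg _), ← real_inner_self_eq_norm_sq]
    congr 1
    have hvv : (⟪v, v⟫ : ℝ) = 1 := by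
      rw [real_inner_self_eq_norm_sq, hv]; norm_num
    have hww : (⟪w, w⟫ : ℝ) = 1 := by
      rw [real_inner_self_eq_norm_sq, hw]; norm_num
    simp only [inner_sub_left, inner_sub_right, real_inner_smul_left, real_inner_smul_right]
    rw [hvv, hww, real_inner_comm w v, ← hb]
    ring
  have hcs : |(⟪u, w⟫ : ℝ) - a * b| ≤ √(1 - a * a) * √(1 - b * b) := by
    rw [← hip, ← hnp, ← hnq]
    exact abs_real_inner_le_norm _ _
  have key : Real.cos (A + B) ≤ ⟪u, w⟫ := by
    rw [Real.cos_add, hcA, hcB, hsA, hsB]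
    nlinarith [abs_le.mp hcs]
  have hang : angle u w = Real.arccos ⟪u, w⟫ := by
    rw [angle, hu, hw]; norm_num
  rw [hang]
  calc Real.arccos ⟪u, w⟫ ≤ Real.arccos (Real.cos (A + B)) := by
        unfold Real.arccos
        exact sub_le_sub_left (Real.monotone_arcsin key) _
    _ = A + B := Real.arccos_cos (by linarith) hπ.le

open InnerProductGeometry in
/-- Triangle inequality with general nonzero left vector. -/
lemma angle_triangle' {d : ℕ} (x v w : EuclideanSpace ℝ (Fin d))
    (hx : x ≠ 0) (hv : ‖v‖ = 1) (hw : ‖w‖ = 1) :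
    angle x w ≤ angle x v + angle v w := by
  have hx' : (0 : ℝ) < ‖x‖⁻¹ := inv_pos.mpr (norm_pos_iff.mpr hx)
  have hu : ‖(‖x‖⁻¹ • x : EuclideanSpace ℝ (Fin d))‖ = 1 := by
    rw [norm_smul, norm_inv, norm_norm]
    exact inv_mul_cancel₀ (norm_ne_zero_iff.mpr hx)
  have h1 : angle (‖x‖⁻¹ • x) w = angle x w := angle_smul_left_of_pos x w hx'
  have h2 : angle (‖x‖⁻¹ • x) v = angle x v := angle_smul_left_of_pos x v hx'
  rw [← h1, ← h2]
  exact angle_triangle_unit _ v w hu hv hw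

lemma wp_nonneg {α μ₀ : ℝ} (hμ : 0 ≤ μ₀) (ϑ : ℝ) (hϑ : 0 ≤ ϑ) : 0 ≤ wp α μ₀ ϑ :=
  le_min (by positivity) (by norm_num)

lemma wp_le {α μ₀ t ϑ : ℝ} (hα : 0 < α) (hα' : α < 1) (hμ : 0 ≤ μ₀) (ht : 0 ≤ t)
    (hϑ0 : 0 ≤ ϑ) (hϑ : ϑ ≤ 13 * t) : wp α μ₀ ϑ ≤ μ₀ * (26 * t) ^ (α / (1 - α)) := by
  have hp : 0 ≤ α / (1 - α) := div_nonneg hα.le (by linarith)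
  have hmul : ((26 : ℝ) * t) ^ (α / (1 - α)) =
      (2 : ℝ) ^ (α / (1 - α)) * (13 * t) ^ (α / (1 - α)) := by
    rw [← Real.mul_rpow (by norm_num) (by linarith : (0:ℝ) ≤ 13 * t)]
    congr 1
    ring
  calc wp α μ₀ ϑ ≤ (2 : ℝ) ^ (α / (1 - α)) * μ₀ * ϑ ^ (α / (1 - α)) := min_le_left _ _
    _ ≤ (2 : ℝ) ^ (α / (1 - α)) * μ₀ * (13 * t) ^ (α / (1 - α)) := by
        have := Real.rpow_le_rpow hϑ0 hϑ hp
        have h2 : (0:ℝ) ≤ (2 : ℝ) ^ (α / (1 - α)) * μ₀ := by positivity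
        exact mul_le_mul_of_nonneg_left this h2
    _ = μ₀ * (26 * t) ^ (α / (1 - α)) := by rw [hmul]; ring

/-- The constructed label functions `η_i, η_j` agree far from the reference hyperplane and
are pointwise within `2·μ₀·(26·t)^{α/(1−α)}` of each other. -/
theorem stmt_12 (d : ℕ) (α μ₀ t : ℝ) (hα : 0 < α) (hα' : α < 1) (hμ : 0 < μ₀) (ht : 0 < t)
    (w₁ wi wj : EuclideanSpace ℝ (Fin d)) (hw₁ : ‖w₁‖ = 1) (hwi : ‖wi‖ = 1) (hwj : ‖wj‖ = 1)
    (hanglei : InnerProductGeometry.angle w₁ wi ≤ 6.5 * t)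
    (hanglej : InnerProductGeometry.angle w₁ wj ≤ 6.5 * t) :
    ∀ x : EuclideanSpace ℝ (Fin d), x ≠ 0 →
      (6.5 * t < |phi x w₁| → eta α μ₀ t w₁ wi x = eta α μ₀ t w₁ wj x) ∧
      |eta α μ₀ t w₁ wi x - eta α μ₀ t w₁ wj x| ≤ 2 * μ₀ * (26 * t) ^ (α / (1 - α)) := by
  intro x hx
  by_cases hfar : |phi x w₁| ≤ 6.5 * t
  · constructor
    · intro h; linarith
    · -- near case
      have hbound : ∀ w : EuclideanSpace ℝ (Fin d), ‖w‖ = 1 →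
          InnerProductGeometry.angle w₁ w ≤ 6.5 * t → |phi x w| ≤ 13 * t := by
        intro w hw hang
        have h1 := angle_triangle' x w₁ w hx hw₁ hw
        have h2 := angle_triangle' x w w₁ hx hw hw₁
        rw [InnerProductGeometry.angle_comm w w₁] at h2
        have hdiff : |phi x w - phi x w₁| ≤ 6.5 * t := by
          rw [abs_le]
          constructor <;> simp only [phi] <;> nlinarith
        have habs := abs_sub_abs_le_abs_sub (phi x w) (phi x w₁)
        linarith
      have hbi : wp α μ₀ |phi x wi| ≤ μ₀ * (26 * t) ^ (α / (1 - α)) :=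
        wp_le hα hα' hμ.le ht.le (abs_nonneg _) (hbound wi hwi hanglei)
      have hbj : wp α μ₀ |phi x wj| ≤ μ₀ * (26 * t) ^ (α / (1 - α)) :=
        wp_le hα hα' hμ.le ht.le (abs_nonneg _) (hbound wj hwj hanglej)
      have hni : 0 ≤ wp α μ₀ |phi x wi| := wp_nonneg hμ.le _ (abs_nonneg _)
      have hnj : 0 ≤ wp α μ₀ |phi x wj| := wp_nonneg hμ.le _ (abs_nonneg _)
      set si := Real.sign ⟪wi, x⟫ with hsi'
      set sj := Real.sign ⟪wj, x⟫ with hsj'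
      set Pi := wp α μ₀ |phi x wi| with hPi'
      set Pj := wp α μ₀ |phi x wj| with hPj'
      have hsi : |si| ≤ 1 := by
        rcases Real.sign_apply_eq (⟪wi, x⟫ : ℝ) with h | h | h <;> rw [hsi', h] <;> norm_num
      have hsj : |sj| ≤ 1 := by
        rcases Real.sign_apply_eq (⟪wj, x⟫ : ℝ) with h | h | h <;> rw [hsj', h] <;> norm_num
      simp only [eta, if_pos hfar, ← hsi', ← hsj', ← hPi', ← hPj']
      have e1 : |si * Pi| ≤ μ₀ * (26 * t) ^ (α / (1 - α)) := by
        rw [abs_mul, abs_of_nonneg hni]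
        calc |si| * Pi ≤ 1 * Pi := mul_le_mul_of_nonneg_right hsi hni
          _ = Pi := one_mul _
          _ ≤ _ := hbi
      have e2 : |sj * Pj| ≤ μ₀ * (26 * t) ^ (α / (1 - α)) := by
        rw [abs_mul, abs_of_nonneg hnj]
        calc |sj| * Pj ≤ 1 * Pj := mul_le_mul_of_nonneg_right hsj hnj
          _ = Pj := one_mul _
          _ ≤ _ := hbj
      have heq : (1 / 2 + si * Pi) - (1 / 2 + sj * Pj) = si * Pi - sj * Pj := by ring
      rw [heq]
      exact (abs_sub _ _).trans (by linarith)
  · have heq : eta α μ₀ t w₁ wi x = eta α μ₀ t w₁ wj x := by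
      simp only [eta, if_neg hfar]
    refine ⟨fun _ => heq, ?_⟩
    rw [heq, sub_self, abs_zero]
    positivity
end
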